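/- arXiv:1003.4855 — 2 statements merged into one kernel-verified Lean document; each statement's English description precedes it below -/
import Mathlib

section
/- For any nontrivial connected graph G, the partition dimension of G is at most the metric dimension of G plus 1, i.e., pd(G) ≤ dim(G) + 1. -/
open SimpleGraph

/-- Distance from a vertex to a set of vertices: `min {d(v,x) : x ∈ P}`. -/
noncomputable def distToSet {V : Type*} (G : SimpleGraph V) (v : V) (P : Set V) : ℕ :=
  sInf ((G.dist v) '' P)

/-- `S` is a resolving set of `G`. -/
def IsResolvingSet {V : Type*} (G : SimpleGraph V) (S : Set V) : Prop :=
  ∀ u v : V, u ≠ v → ∃ w ∈ S, G.dist u w ≠ G.dist v w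

/-- The metric dimension of `G`. -/
noncomputable def metricDim {V : Type*} (G : SimpleGraph V) : ℕ :=
  sInf {n | ∃ S : Finset V, S.card = n ∧ IsResolvingSet G ↑S}

/-- `Π` is a resolving partition of `G`: a partition of the vertex set such that
distinct vertices have distinct vectors of distances to the parts. -/
def IsResolvingPartition {V : Type*} (G : SimpleGraph V) (Pi : Set (Set V)) : Prop :=
  Setoid.IsPartition Pi ∧
    ∀ u v : V, u ≠ v → ∃ P ∈ Pi, distToSet G u P ≠ distToSet G v P

/-- The partition dimension of `G`. -/
noncomputable def partitionDim {V : Type*} (G : SimpleGraph V) : ℕ :=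
  sInf {n | ∃ Pi : Finset (Set V), Pi.card = n ∧ IsResolvingPartition G ↑Pi}


lemma distToSet_singleton {V : Type*} (G : SimpleGraph V) (v w : V) :
    distToSet G v {w} = G.dist v w := by
  simp [distToSet]

lemma SimpleGraph.Connected.isResolvingSet_univ {V : Type*} {G : SimpleGraph V}
    (hG : G.Connected) : IsResolvingSet G Set.univ := fun u v huv =>
  ⟨u, trivial, by rw [G.dist_self]; exact (hG.pos_dist_of_ne huv.symm).ne⟩

lemma SimpleGraph.Connected.exists_isResolvingSet_card_eq_metricDim {V : Type*} [Fintype V]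
    {G : SimpleGraph V} (hG : G.Connected) :
    ∃ S : Finset V, S.card = metricDim G ∧ IsResolvingSet G S :=
  Nat.sInf_mem (s := {n | ∃ S : Finset V, S.card = n ∧ IsResolvingSet G ↑S})
    ⟨_, Finset.univ, rfl, by simpa using hG.isResolvingSet_univ⟩

lemma IsResolvingSet.isResolvingPartition {V : Type*} {G : SimpleGraph V} {S : Set V}
    {Pi : Set (Set V)} (hS : IsResolvingSet G S) (hPi : Setoid.IsPartition Pi)
    (hsingleton : ∀ w ∈ S, {w} ∈ Pi) : IsResolvingPartition G Pi := by
  refine ⟨hPi, fun u v huv => ?_⟩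
  obtain ⟨w, hw, hdist⟩ := hS u v huv
  exact ⟨{w}, hsingleton w hw, by simpa only [distToSet_singleton] using hdist⟩

/-- The witness is the partition into the singletons of `S` and the complement of `S`, i.e. the
fibres of the map sending `v ∈ S` to `some v` and everything else to `none`. -/
lemma IsResolvingSet.partitionDim_le_card_add_one {V : Type*} {G : SimpleGraph V}
    {S : Finset V} (hS : IsResolvingSet G S) : partitionDim G ≤ S.card + 1 := by
  classical
  let f : V → Option S := fun v => if h : v ∈ S then some ⟨v, h⟩ else none
  have hfiber : ∀ w ∈ S, {x | f x = f w} = {w} := by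
    intro w hw
    ext x
    by_cases hx : x ∈ S
    · simp [f, hx, hw]
    · simpa [f, hx, hw] using (ne_of_mem_of_not_mem hw hx).symm
  let Pi : Finset (Set V) := (Setoid.finite_classes_ker f).toFinset
  have hres : IsResolvingPartition G ↑Pi := by
    refine hS.isResolvingPartition (by simpa [Pi] using Setoid.isPartition_classes _) ?_
    intro w hw
    simpa [Pi, hfiber w hw] using Setoid.mem_classes (Setoid.ker f) w
  calc partitionDim G ≤ Pi.card := Nat.sInf_le ⟨Pi, rfl, hres⟩
    _ ≤ (Finset.univ.image fun y => {x | f x = y}).card := by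
      refine Finset.card_le_card fun P hP => ?_
      obtain ⟨y, rfl⟩ := Setoid.classes_ker_subset_fiber_set f ((Set.Finite.mem_toFinset _).1 hP)
      exact Finset.mem_image_of_mem _ (Finset.mem_univ y)
    _ ≤ Fintype.card (Option S) := Finset.card_image_le
    _ = S.card + 1 := by simp

theorem stmt_2_general {V : Type*} [Fintype V] (G : SimpleGraph V)
    (hG : G.Connected) : partitionDim G ≤ metricDim G + 1 := by
  obtain ⟨S, hcard, hS⟩ := hG.exists_isResolvingSet_card_eq_metricDim
  exact hcard ▸ hS.partitionDim_le_card_add_one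

theorem stmt_2 {V : Type*} [Fintype V] [Nontrivial V] (G : SimpleGraph V)
    (hG : G.Connected) : partitionDim G ≤ metricDim G + 1 :=
  stmt_2_general G hG
end

section
/- Let Π₁ = {A₁,...,A_k} and Π₂ = {B₁,...,B_t} be resolving partitions of connected graphs G₁ and G₂ respectively. Then the partition of V(G₁) × V(G₂) consisting of the sets A₁×B₁, A₁×B₂, ..., A₁×B_t, A₂×B₁, A₃×B₁, ..., A_k×B₁, together with C = (V₁×V₂) \ ((V₁×B₁) ∪ (A₁×V₂)), is a resolving partition of the Cartesian product G₁ × G₂ (with k + t parts, counting C when it is nonempty). -/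
open SimpleGraph

/-!
Distances in `G₁ □ G₂` add coordinatewise, hence so do distances to a product `A × B`.
Vertices `(x, y) ≠ (x', y')` with `x ≠ x'` are told apart by some column part `Aᵢ × B₀`:
if all these distance sums agreed, comparing them at the parts containing `x` and `x'` forces
`d(y, B₀) = d(y', B₀)`, so the column parts would not resolve `x, x'` in `G₁`. If `x = x'`, they
are told apart by a row part `A₀ × Bⱼ`.
-/

namespace SimpleGraph

variable {V W : Type*} {G : SimpleGraph V} {H : SimpleGraph W}

lemma dist_boxProd (hG : G.Preconnected) (hH : H.Preconnected) (x y : V × W) :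
    (G □ H).dist x y = G.dist x.1 y.1 + H.dist x.2 y.2 := by
  rw [dist, edist_boxProd, ENat.toNat_add (edist_ne_top_iff_reachable.mpr (hG _ _))
    (edist_ne_top_iff_reachable.mpr (hH _ _))]
  rfl

end SimpleGraph

section DistToSet

variable {V W : Type*} {G : SimpleGraph V} {H : SimpleGraph W}

lemma distToSet_le_dist {v a : V} {P : Set V} (ha : a ∈ P) : distToSet G v P ≤ G.dist v a :=
  Nat.sInf_le ⟨a, ha, rfl⟩

lemma distToSet_eq_zero_of_mem {v : V} {P : Set V} (hv : v ∈ P) : distToSet G v P = 0 :=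
  Nat.eq_zero_of_le_zero (dist_self (G := G) ▸ distToSet_le_dist hv)

lemma exists_mem_dist_eq_distToSet (v : V) {P : Set V} (hP : P.Nonempty) :
    ∃ a ∈ P, G.dist v a = distToSet G v P :=
  Nat.sInf_mem (hP.image _)

lemma le_distToSet {v : V} {P : Set V} {n : ℕ} (hP : P.Nonempty) (h : ∀ a ∈ P, n ≤ G.dist v a) :
    n ≤ distToSet G v P :=
  le_csInf (hP.image _) (Set.forall_mem_image.mpr h)

lemma distToSet_boxProd_prod (hG : G.Preconnected) (hH : H.Preconnected) (x : V) (y : W)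
    {P : Set V} {Q : Set W} (hP : P.Nonempty) (hQ : Q.Nonempty) :
    distToSet (G □ H) (x, y) (P ×ˢ Q) = distToSet G x P + distToSet H y Q := by
  apply le_antisymm
  · obtain ⟨a, ha, hda⟩ := exists_mem_dist_eq_distToSet (G := G) x hP
    obtain ⟨b, hb, hdb⟩ := exists_mem_dist_eq_distToSet (G := H) y hQ
    calc distToSet (G □ H) (x, y) (P ×ˢ Q) ≤ (G □ H).dist (x, y) (a, b) :=
          distToSet_le_dist (Set.mk_mem_prod ha hb)
      _ = distToSet G x P + distToSet H y Q := by rw [dist_boxProd hG hH, hda, hdb]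
  · refine le_distToSet (hP.prod hQ) fun ⟨a, b⟩ ⟨ha, hb⟩ => ?_
    rw [dist_boxProd hG hH]
    exact add_le_add (distToSet_le_dist ha) (distToSet_le_dist hb)

end DistToSet

lemma Setoid.IsPartition.exists_mem_range {α ι : Type*} {A : ι → Set α}
    (hA : Setoid.IsPartition (Set.range A)) (x : α) : ∃ i, x ∈ A i := by
  obtain ⟨_, ⟨⟨i, rfl⟩, hx⟩, -⟩ := hA.2 x
  exact ⟨i, hx⟩

lemma Setoid.IsPartition.eq_of_mem_range {α ι : Type*} {A : ι → Set α}
    (hA : Setoid.IsPartition (Set.range A)) {x : α} {i i' : ι} (hi : x ∈ A i) (hi' : x ∈ A i') :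
    A i = A i' :=
  Setoid.eq_of_mem_eqv_class hA.2 ⟨i, rfl⟩ hi ⟨i', rfl⟩ hi'

lemma exists_add_ne_add_of_ne {ι : Type*} {f g : ι → ℕ} (hf : ∃ i, f i = 0) (hg : ∃ i, g i = 0)
    (hfg : ∃ i, f i ≠ g i) (a b : ℕ) : ∃ i, f i + a ≠ g i + b := by
  by_contra! h
  obtain ⟨i₁, hi₁⟩ := hf
  obtain ⟨i₂, hi₂⟩ := hg
  obtain ⟨i, hi⟩ := hfg
  have := h i₁
  have := h i₂
  have := h i
  omega

section CrossPartition

variable {α β ι κ : Type*}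

def crossPartition (A : ι → Set α) (B : κ → Set β) (i₀ : ι) (j₀ : κ) : Set (Set (α × β)) :=
  ((Set.range fun j => A i₀ ×ˢ B j) ∪ (Set.range fun i => A i ×ˢ B j₀) ∪
    {Set.univ \ ((Set.univ ×ˢ B j₀) ∪ (A i₀ ×ˢ Set.univ))}) \ {∅}

variable {A : ι → Set α} {B : κ → Set β} {i₀ : ι} {j₀ : κ}

lemma row_mem_crossPartition {j : κ} (ha : (A i₀).Nonempty) (hb : (B j).Nonempty) :
    A i₀ ×ˢ B j ∈ crossPartition A B i₀ j₀ :=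
  ⟨Or.inl (Or.inl ⟨j, rfl⟩), (ha.prod hb).ne_empty⟩

lemma column_mem_crossPartition {i : ι} (ha : (A i).Nonempty) (hb : (B j₀).Nonempty) :
    A i ×ˢ B j₀ ∈ crossPartition A B i₀ j₀ :=
  ⟨Or.inl (Or.inr ⟨i, rfl⟩), (ha.prod hb).ne_empty⟩

lemma eq_of_mem_crossPartition (hA : Setoid.IsPartition (Set.range A))
    (hB : Setoid.IsPartition (Set.range B)) {p : α × β} {S S' : Set (α × β)}
    (hS : S ∈ crossPartition A B i₀ j₀) (hS' : S' ∈ crossPartition A B i₀ j₀)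
    (hp : p ∈ S) (hp' : p ∈ S') : S = S' := by
  obtain ⟨(⟨j, rfl⟩ | ⟨i, rfl⟩) | rfl, -⟩ := hS <;>
    obtain ⟨(⟨j', rfl⟩ | ⟨i', rfl⟩) | rfl, -⟩ := hS' <;> dsimp only at hp hp' ⊢
  · rw [hB.eq_of_mem_range hp.2 hp'.2]
  · rw [hA.eq_of_mem_range hp.1 hp'.1, hB.eq_of_mem_range hp.2 hp'.2]
  · exact absurd (Or.inr ⟨hp.1, trivial⟩) hp'.2
  · rw [hA.eq_of_mem_range hp.1 hp'.1, hB.eq_of_mem_range hp.2 hp'.2]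
  · rw [hA.eq_of_mem_range hp.1 hp'.1]
  · exact absurd (Or.inl ⟨trivial, hp.2⟩) hp'.2
  · exact absurd (Or.inr ⟨hp'.1, trivial⟩) hp.2
  · exact absurd (Or.inl ⟨trivial, hp'.2⟩) hp.2

lemma exists_mem_crossPartition (hA : Setoid.IsPartition (Set.range A))
    (hB : Setoid.IsPartition (Set.range B)) (p : α × β) :
    ∃ S ∈ crossPartition A B i₀ j₀, p ∈ S := by
  obtain ⟨x, y⟩ := p
  by_cases hx : x ∈ A i₀
  · obtain ⟨j, hj⟩ := hB.exists_mem_range y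
    exact ⟨_, row_mem_crossPartition ⟨x, hx⟩ ⟨y, hj⟩, hx, hj⟩
  by_cases hy : y ∈ B j₀
  · obtain ⟨i, hi⟩ := hA.exists_mem_range x
    exact ⟨_, column_mem_crossPartition ⟨x, hi⟩ ⟨y, hy⟩, hi, hy⟩
  have hxy : (x, y) ∈ Set.univ \ ((Set.univ ×ˢ B j₀) ∪ (A i₀ ×ˢ Set.univ)) := by
    simp [hx, hy]
  exact ⟨_, ⟨Or.inr rfl, Set.nonempty_iff_ne_empty.mp ⟨_, hxy⟩⟩, hxy⟩

lemma isPartition_crossPartition (hA : Setoid.IsPartition (Set.range A))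
    (hB : Setoid.IsPartition (Set.range B)) :
    Setoid.IsPartition (crossPartition A B i₀ j₀) :=
  ⟨fun h => h.2 rfl, fun p => existsUnique_of_exists_of_unique
    (exists_mem_crossPartition hA hB p)
    fun _ _ hS hS' => eq_of_mem_crossPartition hA hB hS.1 hS'.1 hS.2 hS'.2⟩

lemma isResolvingPartition_crossPartition {G₁ : SimpleGraph α} {G₂ : SimpleGraph β}
    (hG₁ : G₁.Preconnected) (hG₂ : G₂.Preconnected)
    (hA : IsResolvingPartition G₁ (Set.range A)) (hB : IsResolvingPartition G₂ (Set.range B)) :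
    IsResolvingPartition (G₁ □ G₂) (crossPartition A B i₀ j₀) := by
  have hAne (i : ι) : (A i).Nonempty := Setoid.nonempty_of_mem_partition hA.1 ⟨i, rfl⟩
  have hBne (j : κ) : (B j).Nonempty := Setoid.nonempty_of_mem_partition hB.1 ⟨j, rfl⟩
  refine ⟨isPartition_crossPartition hA.1 hB.1, ?_⟩
  rintro ⟨x, y⟩ ⟨x', y'⟩ hne
  by_cases hx : x = x'
  · subst hx
    obtain ⟨_, ⟨j, rfl⟩, hj⟩ := hB.2 y y' fun hy => hne (by rw [hy])
    refine ⟨_, row_mem_crossPartition (hAne i₀) (hBne j), ?_⟩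
    rwa [distToSet_boxProd_prod hG₁ hG₂ _ _ (hAne i₀) (hBne j),
      distToSet_boxProd_prod hG₁ hG₂ _ _ (hAne i₀) (hBne j), ne_eq, Nat.add_left_cancel_iff]
  · have hzero (z : α) : ∃ i, distToSet G₁ z (A i) = 0 :=
      (hA.1.exists_mem_range z).imp fun _ => distToSet_eq_zero_of_mem
    obtain ⟨_, ⟨i', rfl⟩, hi'⟩ := hA.2 x x' hx
    obtain ⟨i, hi⟩ := exists_add_ne_add_of_ne (hzero x) (hzero x') ⟨i', hi'⟩
      (distToSet G₂ y (B j₀)) (distToSet G₂ y' (B j₀))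
    refine ⟨_, column_mem_crossPartition (hAne i) (hBne j₀), ?_⟩
    rwa [distToSet_boxProd_prod hG₁ hG₂ _ _ (hAne i) (hBne j₀),
      distToSet_boxProd_prod hG₁ hG₂ _ _ (hAne i) (hBne j₀)]

end CrossPartition

theorem stmt_4 {V₁ V₂ : Type*} (G₁ : SimpleGraph V₁) (G₂ : SimpleGraph V₂)
    (hG₁ : G₁.Connected) (hG₂ : G₂.Connected) {k t : ℕ}
    (A : Fin (k + 1) → Set V₁) (B : Fin (t + 1) → Set V₂)
    (hA : IsResolvingPartition G₁ (Set.range A))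
    (hB : IsResolvingPartition G₂ (Set.range B)) :
    IsResolvingPartition (G₁.boxProd G₂)
      (((Set.range fun j => A 0 ×ˢ B j) ∪ (Set.range fun i => A i ×ˢ B 0) ∪
        {Set.univ \ ((Set.univ ×ˢ B 0) ∪ (A 0 ×ˢ Set.univ))}) \ {∅}) :=
  isResolvingPartition_crossPartition hG₁.preconnected hG₂.preconnected hA hB
end
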